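/- (Drift condition) Let a ∈ (0,1), γ ∈ (0,1), Z be a random element of C(S²,(0,∞)) with ‖Z^γ‖_∞ distributed as Y^γ ‖f^γ‖_∞ for Y standard Fréchet and f a fixed bounded positive continuous function. Define, for h ∈ C(S²,(0,∞)), L(h) = ‖h^γ‖_∞ and (P L)(h) = E[ L( max{ a h∘R, (1−a) Z } ) ] where R is a fixed rotation of S². Then (P L)(h) ≤ β L(h) + K with β = a^γ ∈ (0,1) and K = (1−a)^γ ‖f^γ‖_∞ Γ(1−γ). -/

import Mathlib

open MeasureTheory Real

noncomputable abbrev E3 := EuclideanSpace ℝ (Fin 3)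
noncomputable abbrev Sph := Metric.sphere (0 : E3) 1

/-!
Because `x ↦ x ^ γ` is monotone and multiplicative on `[0, ∞)`, and `R` only permutes the points
of the sphere, the integrand equals `max b V` with `b = a ^ γ L(h)` and `V = (1 - a) ^ γ L(Z)`,
and `V` is distributed as `C Y ^ γ` with `C = (1 - a) ^ γ ‖f ^ γ‖_∞`. By the layer-cake formula,
`E[max b V] = ∫₀^∞ P(max b V > t) dt`; the tail is at most `1` for `t ≤ b` and equals
`P(V > t) = 1 - exp (-(C / t) ^ (1 / γ))` for `t > b`. The substitution `t = C u ^ (-γ)` and an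
integration by parts turn the integral of the latter into `C Γ(1 - γ)`.
-/

open Set Filter Topology

lemma one_sub_exp_neg_nonneg {x : ℝ} (hx : 0 ≤ x) : 0 ≤ 1 - exp (-x) := by
  linarith [exp_le_one_iff.mpr (neg_nonpos.mpr hx)]

lemma one_sub_exp_neg_le_self (x : ℝ) : 1 - exp (-x) ≤ x := by
  linarith [add_one_le_exp (-x)]

lemma one_sub_exp_neg_le_one (x : ℝ) : 1 - exp (-x) ≤ 1 := by
  linarith [exp_pos (-x)]

lemma norm_one_sub_exp_neg_mul_rpow {u : ℝ} (hu : 0 ≤ u) (s : ℝ) :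
    ‖(1 - exp (-u)) * u ^ s‖ = (1 - exp (-u)) * u ^ s :=
  Real.norm_of_nonneg (mul_nonneg (one_sub_exp_neg_nonneg hu) (rpow_nonneg hu s))

lemma one_sub_exp_neg_mul_rpow_le_rpow {u : ℝ} (hu : 0 ≤ u) (s : ℝ) :
    (1 - exp (-u)) * u ^ s ≤ u ^ s :=
  mul_le_of_le_one_left (rpow_nonneg hu s) (one_sub_exp_neg_le_one u)

lemma one_sub_exp_neg_mul_rpow_le_rpow_add_one {u : ℝ} (hu : 0 < u) (s : ℝ) :
    (1 - exp (-u)) * u ^ s ≤ u ^ (s + 1) := by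
  rw [rpow_add_one hu.ne', mul_comm (u ^ s)]
  exact mul_le_mul_of_nonneg_right (one_sub_exp_neg_le_self u) (rpow_nonneg hu.le s)

lemma integrableOn_one_sub_exp_neg_mul_rpow {γ : ℝ} (hγ0 : 0 < γ) (hγ1 : γ < 1) :
    IntegrableOn (fun u ↦ (1 - exp (-u)) * u ^ (-γ - 1)) (Ioi 0) := by
  have hcont : ContinuousOn (fun u : ℝ ↦ (1 - exp (-u)) * u ^ (-γ - 1)) (Ioi 0) :=
    (by fun_prop : Continuous fun u : ℝ ↦ 1 - exp (-u)).continuousOn.mul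
      fun u hu ↦ (continuousAt_rpow_const u _ (Or.inl (ne_of_gt hu))).continuousWithinAt
  rw [← Ioc_union_Ioi_eq_Ioi zero_le_one]
  refine IntegrableOn.union ?_ ?_
  · have hdom : IntegrableOn (fun u : ℝ ↦ u ^ (-γ)) (Ioc 0 1) := by
      rw [integrableOn_Ioc_iff_integrableOn_Ioo]
      exact (intervalIntegral.integrableOn_Ioo_rpow_iff one_pos).mpr (by linarith)
    refine hdom.mono' ((hcont.mono Ioc_subset_Ioi_self).aestronglyMeasurable measurableSet_Ioc) ?_
    filter_upwards [ae_restrict_mem measurableSet_Ioc] with u hu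
    rw [norm_one_sub_exp_neg_mul_rpow hu.1.le]
    simpa using one_sub_exp_neg_mul_rpow_le_rpow_add_one hu.1 (-γ - 1)
  · refine (integrableOn_Ioi_rpow_of_lt (a := -γ - 1) (by linarith) one_pos).mono'
      ((hcont.mono (Ioi_subset_Ioi zero_le_one)).aestronglyMeasurable measurableSet_Ioi) ?_
    filter_upwards [ae_restrict_mem measurableSet_Ioi] with u (hu : 1 < u)
    rw [norm_one_sub_exp_neg_mul_rpow (by linarith)]
    exact one_sub_exp_neg_mul_rpow_le_rpow (by linarith) _

lemma integral_one_sub_exp_neg_mul_rpow {γ : ℝ} (hγ0 : 0 < γ) (hγ1 : γ < 1) :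
    ∫ u in Ioi 0, (1 - exp (-u)) * u ^ (-γ - 1) = Gamma (1 - γ) / γ := by
  -- integration by parts against the antiderivative `(exp (-u) - 1) * u ^ (-γ)`
  set F : ℝ → ℝ := fun u ↦ (exp (-u) - 1) * u ^ (-γ)
  have hF_norm : ∀ u, 0 ≤ u → ‖F u‖ = (1 - exp (-u)) * u ^ (-γ) := fun u hu ↦ by
    rw [← norm_one_sub_exp_neg_mul_rpow hu, ← norm_neg, ← neg_mul, neg_sub]
  have hgamma : IntegrableOn (fun u ↦ exp (-u) * u ^ (-γ)) (Ioi 0) := by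
    simpa using GammaIntegral_convergent (by linarith : 0 < 1 - γ)
  have hderiv : ∀ u ∈ Ioi (0 : ℝ), HasDerivAt F
      (γ * ((1 - exp (-u)) * u ^ (-γ - 1)) - exp (-u) * u ^ (-γ)) u := fun u hu ↦ by
    have := ((hasDerivAt_neg u).exp.sub_const 1).mul
      (hasDerivAt_rpow_const (p := -γ) (Or.inl (ne_of_gt hu)))
    exact this.congr_deriv (by ring)
  have hzero : ContinuousWithinAt F (Ici 0) 0 := by
    rw [← continuousWithinAt_Ioi_iff_Ici, ContinuousWithinAt]
    have hF0 : F 0 = 0 := by simp [F]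
    rw [hF0]
    have hlim : Tendsto (fun u : ℝ ↦ u ^ (1 - γ)) (𝓝[>] 0) (𝓝 0) := by
      simpa [zero_rpow (by linarith : 1 - γ ≠ 0)] using
        (continuousAt_rpow_const 0 (1 - γ) (Or.inr (by linarith))).tendsto.mono_left
          nhdsWithin_le_nhds
    refine squeeze_zero_norm' ?_ hlim
    filter_upwards [self_mem_nhdsWithin] with u (hu : 0 < u)
    rw [hF_norm u hu.le]
    simpa [sub_eq_add_neg, add_comm] using one_sub_exp_neg_mul_rpow_le_rpow_add_one hu (-γ)
  have htop : Tendsto F atTop (𝓝 0) := by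
    refine squeeze_zero_norm' ?_ (tendsto_rpow_neg_atTop hγ0)
    filter_upwards [eventually_ge_atTop 0] with u hu
    rw [hF_norm u hu]
    exact one_sub_exp_neg_mul_rpow_le_rpow hu _
  have hFTC := integral_Ioi_of_hasDerivAt_of_tendsto hzero hderiv
    (((integrableOn_one_sub_exp_neg_mul_rpow hγ0 hγ1).const_mul γ).sub hgamma) htop
  rw [integral_sub ((integrableOn_one_sub_exp_neg_mul_rpow hγ0 hγ1).const_mul γ) hgamma,
    integral_const_mul] at hFTC
  rw [Gamma_eq_integral (by linarith), eq_div_iff hγ0.ne']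
  simp only [F, neg_zero, exp_zero, sub_self, zero_mul] at hFTC
  rw [sub_sub_cancel_left]
  linarith

lemma one_sub_exp_neg_one_div_rpow_comp_rpow_neg {γ u : ℝ} (hγ : 0 < γ) (hu : 0 < u) :
    (|-γ| * u ^ (-γ - 1)) • (1 - exp (-(1 / u ^ (-γ)) ^ (1 / γ)))
      = γ * ((1 - exp (-u)) * u ^ (-γ - 1)) := by
  rw [abs_neg, abs_of_pos hγ, smul_eq_mul, rpow_neg hu.le, one_div, one_div, inv_inv,
    rpow_rpow_inv hu.le hγ.ne']
  ring

lemma one_sub_exp_neg_zero_div_rpow {γ : ℝ} (hγ : γ ≠ 0) :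
    (fun t ↦ 1 - exp (-(0 / t) ^ (1 / γ))) = 0 := by
  ext t
  simp [zero_rpow (inv_ne_zero hγ)]

lemma one_sub_exp_neg_div_rpow_comp_mul {γ M : ℝ} (hM : M ≠ 0) :
    (fun t ↦ 1 - exp (-(M / (M * t)) ^ (1 / γ))) = fun t ↦ 1 - exp (-(1 / t) ^ (1 / γ)) := by
  simp only [div_mul_cancel_left₀ hM, one_div]

lemma integrableOn_one_sub_exp_neg_div_rpow {γ M : ℝ} (hγ0 : 0 < γ) (hγ1 : γ < 1) (hM : 0 ≤ M) :
    IntegrableOn (fun t ↦ 1 - exp (-(M / t) ^ (1 / γ))) (Ioi 0) := by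
  rcases hM.eq_or_lt with hM | hM
  · subst hM
    rw [one_sub_exp_neg_zero_div_rpow hγ0.ne']
    exact integrableOn_zero
  rw [← mul_zero M, ← integrableOn_Ioi_comp_mul_left_iff _ 0 hM,
    one_sub_exp_neg_div_rpow_comp_mul hM.ne',
    ← integrableOn_Ioi_comp_rpow_iff _ (neg_ne_zero.mpr hγ0.ne')]
  refine IntegrableOn.congr_fun ((integrableOn_one_sub_exp_neg_mul_rpow hγ0 hγ1).const_mul γ)
    (fun u hu ↦ (one_sub_exp_neg_one_div_rpow_comp_rpow_neg hγ0 hu).symm) measurableSet_Ioi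

lemma integral_one_sub_exp_neg_div_rpow {γ M : ℝ} (hγ0 : 0 < γ) (hγ1 : γ < 1) (hM : 0 ≤ M) :
    ∫ t in Ioi 0, (1 - exp (-(M / t) ^ (1 / γ))) = M * Gamma (1 - γ) := by
  rcases hM.eq_or_lt with hM | hM
  · subst hM
    rw [one_sub_exp_neg_zero_div_rpow hγ0.ne', zero_mul]
    exact integral_zero _ _
  rw [← mul_zero M, ← integral_comp_mul_left_Ioi' _ 0 hM,
    one_sub_exp_neg_div_rpow_comp_mul hM.ne',
    ← integral_comp_rpow_Ioi _ (neg_ne_zero.mpr hγ0.ne'),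
    setIntegral_congr_fun measurableSet_Ioi
      fun u hu ↦ one_sub_exp_neg_one_div_rpow_comp_rpow_neg hγ0 hu,
    integral_const_mul, integral_one_sub_exp_neg_mul_rpow hγ0 hγ1, smul_eq_mul,
    mul_div_cancel₀ _ hγ0.ne']

lemma iSup_max_rpow {ι : Type*} {u v : ι → ℝ} {γ : ℝ} (hγ : 0 ≤ γ) (hu : ∀ i, 0 ≤ u i)
    (hv : ∀ i, 0 ≤ v i) (hub : BddAbove (range fun i ↦ u i ^ γ))
    (hvb : BddAbove (range fun i ↦ v i ^ γ)) :
    ⨆ i, max (u i) (v i) ^ γ = max (⨆ i, u i ^ γ) (⨆ i, v i ^ γ) := by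
  simp_rw [rpow_max (hu _) (hv _) hγ]
  exact ciSup_sup_eq hub hvb

lemma iSup_const_mul_rpow {ι : Type*} {u : ι → ℝ} {c : ℝ} (γ : ℝ) (hc : 0 ≤ c)
    (hu : ∀ i, 0 ≤ u i) :
    ⨆ i, (c * u i) ^ γ = c ^ γ * ⨆ i, u i ^ γ := by
  simp_rw [mul_rpow hc (hu _)]
  exact (mul_iSup_of_nonneg (rpow_nonneg hc γ) _).symm

lemma integral_le_setIntegral_of_measureReal_lt_le {α : Type*} [MeasurableSpace α]
    {μ : Measure α} {f : α → ℝ} {ψ : ℝ → ℝ} (hf : Integrable f μ) (hf0 : 0 ≤ᵐ[μ] f)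
    (hψ : IntegrableOn ψ (Ioi 0)) (htail : ∀ t > 0, μ.real {a | t < f a} ≤ ψ t) :
    ∫ a, f a ∂μ ≤ ∫ t in Ioi 0, ψ t := by
  rw [hf.integral_eq_integral_meas_lt hf0]
  exact integral_mono_of_nonneg (Eventually.of_forall fun _ ↦ measureReal_nonneg) hψ
    ((ae_restrict_mem measurableSet_Ioi).mono htail)

section FrechetDomination

variable {Ω : Type*} [MeasurableSpace Ω] {P : Measure Ω} [IsProbabilityMeasure P]
  {γ C : ℝ} {V : Ω → ℝ}

lemma measureReal_lt_max_le (hC : 0 ≤ C) (K : ℝ)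
    (hV : ∀ y, 0 < y → ENNReal.ofReal (exp (-(C / y) ^ (1 / γ))) ≤ P {ω | V ω ≤ y})
    (hmeas : AEMeasurable (fun ω ↦ max K (V ω)) P) {t : ℝ} (ht : 0 < t) :
    P.real {ω | t < max K (V ω)} ≤ (Ioc 0 K).indicator 1 t + (1 - exp (-(C / t) ^ (1 / γ))) := by
  have htail_nonneg : 0 ≤ 1 - exp (-(C / t) ^ (1 / γ)) :=
    one_sub_exp_neg_nonneg (rpow_nonneg (div_nonneg hC ht.le) _)
  rcases le_or_gt t K with htK | hKt
  · rw [indicator_of_mem (mem_Ioc.mpr ⟨ht, htK⟩), Pi.one_apply]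
    linarith [measureReal_le_one (μ := P) (s := {ω | t < max K (V ω)})]
  have hset : {ω | t < max K (V ω)} = {ω | V ω ≤ t}ᶜ := by
    ext ω
    simp [hKt.not_gt]
  have hnull : NullMeasurableSet {ω | V ω ≤ t} P := by
    rw [← compl_compl {ω | V ω ≤ t}, ← hset]
    exact (hmeas.nullMeasurable measurableSet_Ioi).compl
  rw [indicator_of_notMem (fun h ↦ hKt.not_ge h.2), zero_add, hset,
    probReal_compl_eq_one_sub₀ hnull]
  gcongr
  exact (ENNReal.ofReal_le_iff_le_toReal (measure_ne_top P _)).mp (hV t ht)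

theorem integral_max_le_of_frechet (hγ0 : 0 < γ) (hγ1 : γ < 1) (hC : 0 ≤ C) {K : ℝ} (hK : 0 ≤ K)
    (hV : ∀ y, 0 < y → ENNReal.ofReal (exp (-(C / y) ^ (1 / γ))) ≤ P {ω | V ω ≤ y}) :
    ∫ ω, max K (V ω) ∂P ≤ K + C * Gamma (1 - γ) := by
  have hind : IntegrableOn ((Ioc 0 K).indicator (1 : ℝ → ℝ)) (Ioi 0) :=
    (integrable_indicator_iff measurableSet_Ioc).mpr
      (integrableOn_const measure_Ioc_lt_top.ne).restrict
  have hψ := hind.add (integrableOn_one_sub_exp_neg_div_rpow hγ0 hγ1 hC)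
  have hψ_integral : ∫ t in Ioi 0, ((Ioc 0 K).indicator 1 t + (1 - exp (-(C / t) ^ (1 / γ))))
      = K + C * Gamma (1 - γ) := by
    rw [integral_add hind (integrableOn_one_sub_exp_neg_div_rpow hγ0 hγ1 hC),
      integral_one_sub_exp_neg_div_rpow hγ0 hγ1 hC, integral_indicator_one measurableSet_Ioc,
      measureReal_restrict_apply measurableSet_Ioc,
      inter_eq_self_of_subset_left Ioc_subset_Ioi_self, volume_real_Ioc_of_le hK, sub_zero]
  by_cases hint : Integrable (fun ω ↦ max K (V ω)) P
  · rw [← hψ_integral]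
    exact integral_le_setIntegral_of_measureReal_lt_le hint
      (ae_of_all _ fun _ ↦ le_max_of_le_left hK) hψ
      fun t ht ↦ measureReal_lt_max_le hC K hV hint.aemeasurable ht
  · rw [integral_undef hint]
    have := Gamma_pos_of_pos (by linarith : 0 < 1 - γ)
    positivity

end FrechetDomination

lemma measure_const_mul_le_eq {Ω : Type*} [MeasurableSpace Ω] {P : Measure Ω} {γ C c : ℝ}
    {V : Ω → ℝ} (hc : 0 < c)
    (hV : ∀ y, 0 < y → P {ω | V ω ≤ y} = ENNReal.ofReal (exp (-(C / y) ^ (1 / γ))))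
    {y : ℝ} (hy : 0 < y) :
    P {ω | c * V ω ≤ y} = ENNReal.ofReal (exp (-(c * C / y) ^ (1 / γ))) := by
  have hset : {ω | c * V ω ≤ y} = {ω | V ω ≤ y / c} := by
    ext ω
    exact (le_div_iff₀' hc).symm
  rw [hset, hV _ (div_pos hy hc), div_div_eq_mul_div, mul_comm C]

theorem drift_condition_general (Ω : Type*) [MeasurableSpace Ω] (P : Measure Ω)
    [IsProbabilityMeasure P] (a γ : ℝ) (ha : a ∈ Set.Ioo (0 : ℝ) 1)
    (hγ : γ ∈ Set.Ioo (0 : ℝ) 1)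
    (f : Sph → ℝ) (hfpos : ∀ x, 0 < f x)
    (Z : Ω → Sph → ℝ) (hZc : ∀ ω, Continuous (Z ω)) (hZpos : ∀ ω x, 0 < Z ω x)
    (hZdist : ∀ y : ℝ, 0 < y →
      P {ω | (⨆ x : Sph, Z ω x ^ γ) ≤ y}
        = ENNReal.ofReal (Real.exp (-((⨆ x : Sph, f x ^ γ) / y) ^ (1 / γ))))
    (R : Sph ≃ Sph) (h : Sph → ℝ) (hh : Continuous h) (hhpos : ∀ x, 0 < h x) :
    ∫ ω, (⨆ x : Sph, max (a * h (R x)) ((1 - a) * Z ω x) ^ γ) ∂P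
      ≤ a ^ γ * (⨆ x : Sph, h x ^ γ)
        + (1 - a) ^ γ * (⨆ x : Sph, f x ^ γ) * Real.Gamma (1 - γ) := by
  obtain ⟨ha0, ha1⟩ := ha
  obtain ⟨hγ0, hγ1⟩ := hγ
  have hb0 : 0 < 1 - a := by linarith
  have hbdd : ∀ u : Sph → ℝ, Continuous u → BddAbove (range fun x ↦ u x ^ γ) := fun u hu ↦
    (isCompact_range (hu.rpow_const fun _ ↦ Or.inr hγ0.le)).bddAbove
  have hsup : ∀ ω, ⨆ x, max (a * h (R x)) ((1 - a) * Z ω x) ^ γ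
      = max (a ^ γ * ⨆ x, h x ^ γ) ((1 - a) ^ γ * ⨆ x, Z ω x ^ γ) := fun ω ↦ by
    rw [iSup_max_rpow (u := fun x ↦ a * h (R x)) (v := fun x ↦ (1 - a) * Z ω x) hγ0.le
        (fun x ↦ (mul_pos ha0 (hhpos (R x))).le) (fun x ↦ (mul_pos hb0 (hZpos ω x)).le)
        ((hbdd (fun y ↦ a * h y) (continuous_const.mul hh)).mono
          (range_comp_subset_range R fun y ↦ (a * h y) ^ γ))
        (hbdd _ (continuous_const.mul (hZc ω))),
      iSup_const_mul_rpow γ ha0.le fun x ↦ (hhpos (R x)).le,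
      iSup_const_mul_rpow γ hb0.le fun x ↦ (hZpos ω x).le,
      R.iSup_comp (g := fun y ↦ h y ^ γ)]
  simp only [hsup]
  refine (integral_max_le_of_frechet hγ0 hγ1 ?_ ?_ fun y hy ↦
    (measure_const_mul_le_eq (rpow_pos_of_pos hb0 γ) hZdist hy).ge).trans_eq (by ring)
  · exact mul_nonneg (rpow_nonneg hb0.le _)
      (iSup_nonneg fun x ↦ rpow_nonneg (hfpos x).le _)
  · exact mul_nonneg (rpow_nonneg ha0.le _) (iSup_nonneg fun x ↦ rpow_nonneg (hhpos x).le _)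

/-- Drift condition: for `a, γ ∈ (0,1)`, `Z` a random continuous positive field on `S²`
such that `‖Z^γ‖_∞` is distributed as `Y^γ ‖f^γ‖_∞` with `Y` standard Fréchet and `f` a fixed
positive continuous function, and `L(h) = ‖h^γ‖_∞`, one has
`(𝒫L)(h) = E[L(max{a h∘R, (1−a) Z})] ≤ a^γ L(h) + (1−a)^γ ‖f^γ‖_∞ Γ(1−γ)`. -/
theorem drift_condition (Ω : Type*) [MeasurableSpace Ω] (P : Measure Ω)
    [IsProbabilityMeasure P] (a γ : ℝ) (ha : a ∈ Set.Ioo (0 : ℝ) 1)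
    (hγ : γ ∈ Set.Ioo (0 : ℝ) 1)
    (f : Sph → ℝ) (hf : Continuous f) (hfpos : ∀ x, 0 < f x)
    (Z : Ω → Sph → ℝ) (hZc : ∀ ω, Continuous (Z ω)) (hZpos : ∀ ω x, 0 < Z ω x)
    (hZdist : ∀ y : ℝ, 0 < y →
      P {ω | (⨆ x : Sph, Z ω x ^ γ) ≤ y}
        = ENNReal.ofReal (Real.exp (-((⨆ x : Sph, f x ^ γ) / y) ^ (1 / γ))))
    (R : Sph ≃ Sph) (h : Sph → ℝ) (hh : Continuous h) (hhpos : ∀ x, 0 < h x) :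
    ∫ ω, (⨆ x : Sph, max (a * h (R x)) ((1 - a) * Z ω x) ^ γ) ∂P
      ≤ a ^ γ * (⨆ x : Sph, h x ^ γ)
        + (1 - a) ^ γ * (⨆ x : Sph, f x ^ γ) * Real.Gamma (1 - γ) :=
  drift_condition_general Ω P a γ ha hγ f hfpos Z hZc hZpos hZdist R h hh hhpos
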